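/- For every a, b, c ∈ ℕ and every choice of signs ι₁, ι₂ ∈ {+1, −1} there exist constants κ > 0 and C > 0 such that for all η, σ, p ∈ ℝ with |p| ≤ κ / R(η,σ), the iterated partial derivative ∂_η^a ∂_σ^b ∂_p^c of the function (η,σ,p) ↦ 1/Φ_{ι₁ι₂}(p+η+σ, η, σ) satisfies |∂_η^a ∂_σ^b ∂_p^c [1/Φ_{ι₁ι₂}(p+η+σ, η, σ)]| ≤ C · (min(⟨p+η+σ⟩, ⟨η⟩, ⟨σ⟩))^{1+c}. -/

import Mathlib

/-- The Japanese bracket `⟨x⟩ = √(1 + x²)`. -/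
noncomputable def jb (x : ℝ) : ℝ := Real.sqrt (1 + x ^ 2)

/-- The quadratic Klein–Gordon phase `Φ_{ι₁ι₂}(ξ,η,σ) = ⟨ξ⟩ − ι₁⟨η⟩ − ι₂⟨σ⟩`. -/
noncomputable def Phi (ι₁ ι₂ : ℝ) (ξ η σ : ℝ) : ℝ := jb ξ - ι₁ * jb η - ι₂ * jb σ

/-- `R(η,σ) = ⟨η⟩⟨σ⟩/(⟨η⟩+⟨σ⟩)`, comparable to `min(⟨η⟩,⟨σ⟩)`. -/
noncomputable def Rf (η σ : ℝ) : ℝ := jb η * jb σ / (jb η + jb σ)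

/-- The iterated partial derivative `∂_η^a ∂_σ^b ∂_p^c` of
`(η,σ,p) ↦ 1/Φ_{ι₁ι₂}(p+η+σ, η, σ)`, taken one variable at a time. -/
noncomputable def DrecPhi (ι₁ ι₂ : ℝ) (a b c : ℕ) (η σ p : ℝ) : ℝ :=
  iteratedDeriv a (fun η' =>
    iteratedDeriv b (fun σ' =>
      iteratedDeriv c (fun p' => (Phi ι₁ ι₂ (p' + η' + σ') η' σ')⁻¹) p) σ) η

/-! Set `ξ = p + η + σ` and `m = min(⟨ξ⟩, ⟨η⟩, ⟨σ⟩)`. Differentiating `1/Φ` repeatedly (in the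
three variables) produces linear combinations of `Φ⁻¹ ∏ᵢ ∂^{αᵢ}Φ / Φ` with `∑ αᵢ` the total
multi-index. On the region `|p| ≲ 1/R` the phase satisfies `|Φ| ≳ 1/m`: for `p = 0` this is the
lower bound `⟨η⟩ + ⟨σ⟩ - ⟨η + σ⟩ ≳ 1/min(⟨η + σ⟩, ⟨η⟩, ⟨σ⟩)` (and its sign variants), and moving
`p` changes `Φ` by at most `|p| ≲ 1/min(⟨η⟩, ⟨σ⟩)`. Each ratio obeys
`|∂^α Φ / Φ| ≲ m^{c(α)}`, where `c(α)` is the number of `p`-derivatives: a `p`-derivative hits only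
`⟨ξ⟩` and gives a bounded function, and an `η`/`σ`-derivative of order at least two gives a
function of size `≲ 1/m`. The first-order derivative `ξ/⟨ξ⟩ - ι₁ η/⟨η⟩` is of size `≲ 1/m` when
`ι₁ξη ≥ 0`, while otherwise `|Φ| ≳ 1`. Multiplying out gives the bound `m^{1+c}`. -/

open Asymptotics Filter Topology

lemma jb_sq (x : ℝ) : jb x ^ 2 = 1 + x ^ 2 := Real.sq_sqrt (by positivity)

lemma one_le_jb (x : ℝ) : 1 ≤ jb x := Real.one_le_sqrt.2 (by nlinarith)

lemma jb_pos (x : ℝ) : 0 < jb x := Real.sqrt_pos.2 (by positivity)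

lemma jb_neg (x : ℝ) : jb (-x) = jb x := by simp [jb]

lemma abs_le_jb (x : ℝ) : |x| ≤ jb x := Real.abs_le_sqrt (by nlinarith)

lemma jb_le_abs_add_one (x : ℝ) : jb x ≤ |x| + 1 :=
  Real.sqrt_le_iff.2 ⟨by positivity, by nlinarith [sq_abs x, abs_nonneg x]⟩

lemma jb_le_jb_iff {x y : ℝ} : jb x ≤ jb y ↔ x ^ 2 ≤ y ^ 2 := by
  rw [jb, jb, Real.sqrt_le_sqrt_iff (by positivity), add_le_add_iff_left]

lemma abs_div_jb_le_one (x : ℝ) : |x / jb x| ≤ 1 := by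
  rw [abs_div, abs_of_pos (jb_pos x)]
  exact div_le_one_of_le₀ (abs_le_jb x) (jb_pos x).le

lemma abs_jb_sub_jb_le (x y : ℝ) : |jb x - jb y| ≤ |x - y| := by
  have hsum : |x + y| ≤ jb x + jb y :=
    (abs_add_le x y).trans (add_le_add (abs_le_jb x) (abs_le_jb y))
  have hprod : (jb x - jb y) * (jb x + jb y) = (x - y) * (x + y) := by
    nlinarith [jb_sq x, jb_sq y]
  have hpos : 0 < jb x + jb y := add_pos (jb_pos x) (jb_pos y)
  rw [← mul_le_mul_iff_of_pos_right hpos, ← abs_of_pos hpos, ← abs_mul, hprod, abs_mul]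
  exact mul_le_mul_of_nonneg_left (by rwa [abs_of_pos hpos]) (abs_nonneg _)

lemma one_le_four_mul_min_mul_jb_add_jb_sub (x y : ℝ) :
    1 ≤ 4 * min (jb (x + y)) (min (jb x) (jb y)) * (jb x + jb y - jb (x + y)) := by
  wlog hxy : jb x ≤ jb y generalizing x y
  · simpa only [add_comm x y, add_comm (jb x), min_comm (jb x)] using this y x (le_of_not_ge hxy)
  have hu := jb_sq x; have hv := jb_sq y; have hw := jb_sq (x + y)
  have hu1 := one_le_jb x; have hv1 := one_le_jb y; have hw1 := one_le_jb (x + y)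
  set u := jb x; set v := jb y; set w := jb (x + y)
  -- `(uv - xy)(uv + xy) = 1 + x² + y² ≥ v²` and `(u + v)² - w² = 1 + 2(uv - xy)`
  have hcross : v ^ 2 ≤ 2 * (u * v) * (u * v - x * y) := by
    nlinarith [sq_nonneg (u * v - x * y)]
  have hds : (u + v - w) * (u + v + w) = 1 + 2 * (u * v - x * y) := by nlinarith
  have hcross_pos : 0 < u * v - x * y := by
    nlinarith [mul_pos (one_pos.trans_le hu1) (one_pos.trans_le hv1)]
  have hd : 0 < u + v - w := by nlinarith
  rw [min_eq_left hxy]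
  rcases le_total w u with h | h
  · rw [min_eq_left h]; nlinarith
  · rw [min_eq_right h]
    have : v * v ≤ (u + v - w) * (4 * v) * (u * v) :=
      calc v * v ≤ (u + v - w) * (u + v + w) * (u * v) := by nlinarith
        _ ≤ _ := by gcongr; linarith
    nlinarith

lemma abs_div_jb_sub_div_jb_le {x y : ℝ} (hxy : 0 ≤ x * y) :
    |x / jb x - y / jb y| ≤ (min (jb x) (jb y))⁻¹ := by
  wlog hpos : 0 ≤ x ∧ 0 ≤ y generalizing x y
  · obtain ⟨hx, hy⟩ := (mul_nonneg_iff.1 hxy).resolve_left hpos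
    have := this (x := -x) (y := -y) (by nlinarith) ⟨by linarith, by linarith⟩
    rwa [jb_neg, jb_neg, neg_div, neg_div, neg_sub_neg, abs_sub_comm] at this
  have lower : ∀ z : ℝ, 0 ≤ z → 1 - (jb z)⁻¹ ≤ z / jb z := fun z hz => by
    have := jb_le_abs_add_one z
    rw [abs_of_nonneg hz] at this
    rw [le_div_iff₀ (jb_pos z), sub_mul, inv_mul_cancel₀ (jb_pos z).ne']
    linarith
  have hx := inv_anti₀ (lt_min (jb_pos x) (jb_pos y)) (min_le_left (jb x) (jb y))
  have hy := inv_anti₀ (lt_min (jb_pos x) (jb_pos y)) (min_le_right (jb x) (jb y))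
  have := lower x hpos.1; have := lower y hpos.2
  have := (abs_le.1 (abs_div_jb_le_one x)).2; have := (abs_le.1 (abs_div_jb_le_one y)).2
  rw [abs_le]; constructor <;> linarith

lemma contDiff_jb : ContDiff ℝ ⊤ jb :=
  (contDiff_const.add (contDiff_id.pow 2)).sqrt fun x => by positivity

lemma hasDerivAt_jb (x : ℝ) : HasDerivAt jb (x / jb x) x := by
  have h : HasDerivAt (fun y => 1 + y ^ 2) (2 * x) x := by
    simpa using (hasDerivAt_pow 2 x).const_add 1
  have := h.sqrt (by positivity)
  rwa [mul_div_mul_left _ _ two_ne_zero] at this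

lemma iteratedDeriv_one_jb (x : ℝ) : iteratedDeriv 1 jb x = x / jb x := by
  rw [iteratedDeriv_one, (hasDerivAt_jb x).deriv]

lemma hasDerivAt_iteratedDeriv_jb (n : ℕ) (x : ℝ) :
    HasDerivAt (iteratedDeriv n jb) (iteratedDeriv (n + 1) jb x) x := by
  rw [iteratedDeriv_succ]
  exact ((contDiff_jb.differentiable_iteratedDeriv n (WithTop.coe_lt_top _)) x).hasDerivAt

section JbDerivatives

open Polynomial

lemma abs_eval_le_of_natDegree_le {P : ℝ[X]} {d : ℕ} (hd : P.natDegree ≤ d) {x y : ℝ}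
    (hy : 1 ≤ y) (hxy : |x| ≤ y) :
    |P.eval x| ≤ (∑ i ∈ Finset.range (d + 1), |P.coeff i|) * y ^ d := by
  rw [eval_eq_sum_range' (Nat.lt_succ_of_le hd), Finset.sum_mul]
  refine (Finset.abs_sum_le_sum_abs _ _).trans (Finset.sum_le_sum fun i hi => ?_)
  rw [abs_mul, abs_pow]
  gcongr
  exact (pow_le_pow_left₀ (abs_nonneg x) hxy i).trans
    (pow_le_pow_right₀ hy (Nat.lt_succ_iff.1 (Finset.mem_range.1 hi)))

lemma exists_iteratedDeriv_succ_jb_eq (k : ℕ) : ∃ P : ℝ[X], P.natDegree ≤ k + 1 ∧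
    ∀ x, iteratedDeriv (k + 1) jb x = P.eval x / jb x ^ (2 * k + 1) := by
  induction k with
  | zero => exact ⟨X, by simp, fun x => by simp [iteratedDeriv_one_jb]⟩
  | succ k ih =>
    obtain ⟨P, hdeg, hP⟩ := ih
    -- `(P / ⟨x⟩^(2k+1))' = (P' ⟨x⟩² - (2k+1) x P) / ⟨x⟩^(2k+3)`
    refine ⟨derivative P * (1 + X ^ 2) - C (2 * k + 1 : ℝ) * X * P, ?_, fun x => ?_⟩
    · have := natDegree_derivative_le P
      have : (1 + X ^ 2 : ℝ[X]).natDegree ≤ 2 := by compute_degree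
      have : (C (2 * k + 1 : ℝ) * X).natDegree ≤ 1 := by compute_degree
      refine (natDegree_sub_le _ _).trans
        (max_le (natDegree_mul_le.trans ?_) (natDegree_mul_le.trans ?_)) <;> omega
    · have hj := jb_sq x
      have hj0 := (jb_pos x).ne'
      rw [iteratedDeriv_succ, funext hP, ((P.hasDerivAt x).fun_div
        ((hasDerivAt_jb x).fun_pow (2 * k + 1)) (pow_pos (jb_pos x) _).ne').deriv]
      simp only [eval_sub, eval_mul, eval_add, eval_one, eval_pow, eval_X, eval_C]
      field_simp
      rw [Nat.add_sub_cancel, ← hj]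
      push_cast
      ring

lemma abs_iteratedDeriv_succ_jb_le (k : ℕ) :
    ∃ C, 0 ≤ C ∧ ∀ x, |iteratedDeriv (k + 1) jb x| ≤ C / jb x ^ k := by
  obtain ⟨P, hdeg, hP⟩ := exists_iteratedDeriv_succ_jb_eq k
  refine ⟨∑ i ∈ Finset.range (k + 2), |P.coeff i|, by positivity, fun x => ?_⟩
  have hx := jb_pos x
  rw [hP, abs_div, abs_of_pos (pow_pos hx _), div_le_div_iff₀ (pow_pos hx _) (pow_pos hx _)]
  calc |P.eval x| * jb x ^ k
      ≤ (∑ i ∈ Finset.range (k + 2), |P.coeff i|) * jb x ^ (k + 1) * jb x ^ k := by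
        gcongr; exact abs_eval_le_of_natDegree_le hdeg (one_le_jb x) (abs_le_jb x)
    _ = _ := by ring

end JbDerivatives

section RecipExpansion

variable {M X : Type*} [AddCommMonoid M] (D : M → X → ℝ)

/-- `f` is a linear combination of products `(D 0)⁻¹ ∏ᵢ (D αᵢ / D 0)` with `∑ᵢ αᵢ = β`. -/
inductive IsRecipExpansion : M → (X → ℝ) → Prop
  | inv : IsRecipExpansion 0 fun x => (D 0 x)⁻¹
  | add {β f g} : IsRecipExpansion β f → IsRecipExpansion β g →
      IsRecipExpansion β fun x => f x + g x
  | const_mul {β f} (r : ℝ) : IsRecipExpansion β f → IsRecipExpansion β fun x => r * f x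
  | div_mul {β f} (α : M) : IsRecipExpansion β f →
      IsRecipExpansion (α + β) fun x => D α x / D 0 x * f x

variable {D}

theorem IsRecipExpansion.exists_hasDerivAt {β : M} {f : X → ℝ} (hf : IsRecipExpansion D β f)
    (e : M) :
    ∃ f', IsRecipExpansion D (β + e) f' ∧ ∀ (γ : ℝ → X) (t : ℝ),
      (∀ α, HasDerivAt (fun s => D α (γ s)) (D (α + e) (γ t)) t) → D 0 (γ t) ≠ 0 →
      HasDerivAt (fun s => f (γ s)) (f' (γ t)) t := by
  induction hf with
  | inv =>
    refine ⟨fun x => -1 * (D e x / D 0 x * (D 0 x)⁻¹), ?_, fun γ t hD h0 => ?_⟩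
    · exact (add_comm e 0) ▸ ((inv.div_mul e).const_mul (-1))
    · refine ((hD 0).fun_inv h0).congr_deriv ?_
      rw [zero_add]
      field_simp
  | add _ _ ihf ihg =>
    obtain ⟨f', hf', hf'D⟩ := ihf
    obtain ⟨g', hg', hg'D⟩ := ihg
    exact ⟨_, hf'.add hg', fun γ t hD h0 => (hf'D γ t hD h0).fun_add (hg'D γ t hD h0)⟩
  | const_mul r _ ih =>
    obtain ⟨f', hf', hf'D⟩ := ih
    exact ⟨_, hf'.const_mul r, fun γ t hD h0 => (hf'D γ t hD h0).const_mul r⟩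
  | @div_mul β f α hf ih =>
    obtain ⟨f', hf', hf'D⟩ := ih
    -- `(D α / D 0)' = D (α + e) / D 0 - (D α / D 0) (D e / D 0)`
    refine ⟨fun x => D (α + e) x / D 0 x * f x + -1 * (D α x / D 0 x * (D e x / D 0 x * f x))
      + D α x / D 0 x * f' x, ?_, fun γ t hD h0 => ?_⟩
    · have h₁ := hf.div_mul (α + e)
      have h₂ := ((hf.div_mul e).div_mul α).const_mul (-1)
      have h₃ := hf'.div_mul α
      rw [add_right_comm] at h₁
      rw [← add_assoc, add_right_comm] at h₂
      rw [← add_assoc] at h₃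
      exact (h₁.add h₂).add h₃
    · refine (((hD α).fun_div (hD 0) h0).fun_mul (hf'D γ t hD h0)).congr_deriv ?_
      rw [zero_add]
      field_simp
      ring

/-- `ℓ x` parametrizes a line through `x = ℓ x (π x)` along which `D α` differentiates to
`D (α + e)`. -/
theorem IsRecipExpansion.exists_iteratedDeriv_line {β : M} {f F : X → ℝ}
    (hf : IsRecipExpansion D β f) (hF : ∀ x, D 0 x ≠ 0 → F x = f x)
    {ℓ : X → ℝ → X} {π : X → ℝ} {e : M} (hℓπ : ∀ x, ℓ x (π x) = x)
    (hℓℓ : ∀ x t, ℓ (ℓ x t) = ℓ x) (hπℓ : ∀ x t, π (ℓ x t) = t)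
    (hD : ∀ α x, HasDerivAt (fun t => D α (ℓ x t)) (D (α + e) x) (π x)) (n : ℕ) :
    ∃ g, IsRecipExpansion D (β + n • e) g ∧
      ∀ x, D 0 x ≠ 0 → iteratedDeriv n (fun t => F (ℓ x t)) (π x) = g x := by
  induction n with
  | zero => exact ⟨f, by simpa using hf, fun x hx => by simp [hℓπ, hF x hx]⟩
  | succ n ih =>
    obtain ⟨g, hg, hgF⟩ := ih
    obtain ⟨g', hg', hg'D⟩ := hg.exists_hasDerivAt e
    refine ⟨g', by rwa [succ_nsmul, ← add_assoc], fun x hx => ?_⟩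
    have hD' : ∀ α, HasDerivAt (fun t => D α (ℓ x t)) (D (α + e) (ℓ x (π x))) (π x) := by
      simpa only [hℓπ] using (hD · x)
    have hx' : D 0 (ℓ x (π x)) ≠ 0 := by rwa [hℓπ]
    have heq : iteratedDeriv n (fun t => F (ℓ x t)) =ᶠ[𝓝 (π x)] fun t => g (ℓ x t) :=
      ((hD' 0).continuousAt.eventually_ne hx').mono fun t ht => by
        simpa only [hℓℓ, hπℓ] using hgF (ℓ x t) ht
    rw [iteratedDeriv_succ, heq.deriv_eq, (hg'D (ℓ x) (π x) hD' hx').deriv, hℓπ]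

theorem IsRecipExpansion.isBigO {β : M} {f : X → ℝ} (hf : IsRecipExpansion D β f)
    {l : Filter X} (ν : M →+ ℕ) {m : X → ℝ} (h0 : (fun x => (D 0 x)⁻¹) =O[l] m)
    (hD : ∀ α, (fun x => D α x / D 0 x) =O[l] fun x => m x ^ ν α) :
    f =O[l] fun x => m x ^ (1 + ν β) := by
  induction hf with
  | inv => simpa using h0
  | add _ _ ihf ihg => exact ihf.add ihg
  | const_mul r _ ih => exact ih.const_mul_left r
  | div_mul α _ ih =>
    refine ((hD α).mul ih).congr_right fun x => ?_
    rw [map_add, ← pow_add]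
    ring_nf

end RecipExpansion

/-- `∂_η^a ∂_σ^b ∂_p^c Φ_{ι₁ι₂}(p + η + σ, η, σ)` for `α = (a, b, c)`. -/
noncomputable def phaseDeriv (ι₁ ι₂ : ℝ) (α : ℕ × ℕ × ℕ) (η σ p : ℝ) : ℝ :=
  iteratedDeriv (α.1 + α.2.1 + α.2.2) jb (p + η + σ)
    - (if α.2.1 = 0 ∧ α.2.2 = 0 then ι₁ * iteratedDeriv α.1 jb η else 0)
    - (if α.1 = 0 ∧ α.2.2 = 0 then ι₂ * iteratedDeriv α.2.1 jb σ else 0)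

lemma phaseDeriv_zero (ι₁ ι₂ η σ p : ℝ) :
    phaseDeriv ι₁ ι₂ 0 η σ p = Phi ι₁ ι₂ (p + η + σ) η σ := by
  simp [phaseDeriv, Phi]

lemma phaseDeriv_swap (ι₁ ι₂ : ℝ) (a b c : ℕ) (η σ p : ℝ) :
    phaseDeriv ι₁ ι₂ (a, b, c) η σ p = phaseDeriv ι₂ ι₁ (b, a, c) σ η p := by
  simp only [phaseDeriv]
  rw [add_right_comm p, Nat.add_comm a b, sub_right_comm]

lemma hasDerivAt_ite_iteratedDeriv_jb (P : Prop) [Decidable P] (ι : ℝ) (n : ℕ) (x : ℝ) :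
    HasDerivAt (fun t => if P then ι * iteratedDeriv n jb t else 0)
      (if P then ι * iteratedDeriv (n + 1) jb x else 0) x := by
  split_ifs
  exacts [(hasDerivAt_iteratedDeriv_jb n x).const_mul ι, hasDerivAt_const x 0]

section PhaseDerivLines

variable (ι₁ ι₂ : ℝ) (α : ℕ × ℕ × ℕ) (η σ p : ℝ)

lemma hasDerivAt_phaseDeriv_eta :
    HasDerivAt (fun t => phaseDeriv ι₁ ι₂ α t σ p) (phaseDeriv ι₁ ι₂ (α + (1, 0, 0)) η σ p) η := by
  obtain ⟨a, b, c⟩ := α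
  have hξ : HasDerivAt (fun t => p + t + σ) 1 η := ((hasDerivAt_id η).const_add p).add_const σ
  have := (((hasDerivAt_iteratedDeriv_jb (a + b + c) _).comp η hξ).fun_sub
    (hasDerivAt_ite_iteratedDeriv_jb (b = 0 ∧ c = 0) ι₁ a η)).sub_const
    (if a = 0 ∧ c = 0 then ι₂ * iteratedDeriv b jb σ else 0)
  refine this.congr_deriv ?_
  simp [phaseDeriv, add_assoc, add_comm, add_left_comm]

lemma hasDerivAt_phaseDeriv_sigma :
    HasDerivAt (fun t => phaseDeriv ι₁ ι₂ α η t p) (phaseDeriv ι₁ ι₂ (α + (0, 1, 0)) η σ p) σ := by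
  obtain ⟨a, b, c⟩ := α
  have hξ : HasDerivAt (fun t => p + η + t) 1 σ := (hasDerivAt_id σ).const_add (p + η)
  have := (((hasDerivAt_iteratedDeriv_jb (a + b + c) _).comp σ hξ).sub_const
    (if b = 0 ∧ c = 0 then ι₁ * iteratedDeriv a jb η else 0)).fun_sub
    (hasDerivAt_ite_iteratedDeriv_jb (a = 0 ∧ c = 0) ι₂ b σ)
  refine this.congr_deriv ?_
  simp [phaseDeriv, add_assoc, add_comm, add_left_comm]

lemma hasDerivAt_phaseDeriv_p :
    HasDerivAt (fun t => phaseDeriv ι₁ ι₂ α η σ t) (phaseDeriv ι₁ ι₂ (α + (0, 0, 1)) η σ p) p := by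
  obtain ⟨a, b, c⟩ := α
  have hξ : HasDerivAt (fun t => t + η + σ) 1 p := ((hasDerivAt_id p).add_const η).add_const σ
  have := (((hasDerivAt_iteratedDeriv_jb (a + b + c) _).comp p hξ).sub_const
    (if b = 0 ∧ c = 0 then ι₁ * iteratedDeriv a jb η else 0)).sub_const
    (if a = 0 ∧ c = 0 then ι₂ * iteratedDeriv b jb σ else 0)
  refine this.congr_deriv ?_
  simp [phaseDeriv, add_assoc, add_comm, add_left_comm]

end PhaseDerivLines

lemma exists_isRecipExpansion_DrecPhi (ι₁ ι₂ : ℝ) (a b c : ℕ) :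
    ∃ f, IsRecipExpansion (fun α (x : ℝ × ℝ × ℝ) => phaseDeriv ι₁ ι₂ α x.1 x.2.1 x.2.2)
      (a, b, c) f ∧
      ∀ η σ p, Phi ι₁ ι₂ (p + η + σ) η σ ≠ 0 → DrecPhi ι₁ ι₂ a b c η σ p = f (η, σ, p) := by
  obtain ⟨f₁, hf₁, hF₁⟩ := (IsRecipExpansion.inv
      (D := fun α (x : ℝ × ℝ × ℝ) => phaseDeriv ι₁ ι₂ α x.1 x.2.1 x.2.2)).exists_iteratedDeriv_line
    (F := fun x => (Phi ι₁ ι₂ (x.2.2 + x.1 + x.2.1) x.1 x.2.1)⁻¹)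
    (fun x _ => by rw [phaseDeriv_zero]) (ℓ := fun x t => (x.1, x.2.1, t)) (π := fun x => x.2.2)
    (fun _ => rfl) (fun _ _ => rfl) (fun _ _ => rfl)
    (fun α x => hasDerivAt_phaseDeriv_p ι₁ ι₂ α x.1 x.2.1 x.2.2) c
  obtain ⟨f₂, hf₂, hF₂⟩ := hf₁.exists_iteratedDeriv_line hF₁
    (ℓ := fun x t => (x.1, t, x.2.2)) (π := fun x => x.2.1)
    (fun _ => rfl) (fun _ _ => rfl) (fun _ _ => rfl)
    (fun α x => hasDerivAt_phaseDeriv_sigma ι₁ ι₂ α x.1 x.2.1 x.2.2) b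
  obtain ⟨f₃, hf₃, hF₃⟩ := hf₂.exists_iteratedDeriv_line hF₂
    (ℓ := fun x t => (t, x.2.1, x.2.2)) (π := fun x => x.1)
    (fun _ => rfl) (fun _ _ => rfl) (fun _ _ => rfl)
    (fun α x => hasDerivAt_phaseDeriv_eta ι₁ ι₂ α x.1 x.2.1 x.2.2) a
  refine ⟨f₃, ?_, fun η σ p h => hF₃ (η, σ, p) (by rwa [phaseDeriv_zero])⟩
  convert hf₃ using 1
  simp

noncomputable def minJb (η σ p : ℝ) : ℝ := min (jb (p + η + σ)) (min (jb η) (jb σ))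

lemma one_le_minJb (η σ p : ℝ) : 1 ≤ minJb η σ p :=
  le_min (one_le_jb _) (le_min (one_le_jb _) (one_le_jb _))

lemma minJb_le_jb_add (η σ p : ℝ) : minJb η σ p ≤ jb (p + η + σ) := min_le_left _ _

lemma minJb_le_min (η σ p : ℝ) : minJb η σ p ≤ min (jb η) (jb σ) := min_le_right _ _

lemma exists_abs_phaseDeriv_p_succ_le (ι₁ ι₂ : ℝ) (a b c : ℕ) :
    ∃ C, 0 ≤ C ∧ ∀ η σ p, |phaseDeriv ι₁ ι₂ (a, b, c + 1) η σ p| ≤ C := by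
  obtain ⟨C, hC0, hC⟩ := abs_iteratedDeriv_succ_jb_le (a + b + c)
  refine ⟨C, hC0, fun η σ p => ?_⟩
  simp only [phaseDeriv, Nat.add_one_ne_zero, and_false, if_false, sub_zero, ← add_assoc]
  exact (hC _).trans (div_le_self hC0 (one_le_pow₀ (one_le_jb _)))

lemma exists_abs_phaseDeriv_le_div_minJb (ι₁ ι₂ : ℝ) {a b : ℕ} (hab : 2 ≤ a + b) :
    ∃ C, 0 ≤ C ∧ ∀ η σ p, |phaseDeriv ι₁ ι₂ (a, b, 0) η σ p| ≤ C / minJb η σ p := by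
  obtain ⟨k, hk⟩ : ∃ k, a + b = k + 1 := ⟨a + b - 1, by omega⟩
  obtain ⟨C, hC0, hC⟩ := abs_iteratedDeriv_succ_jb_le k
  refine ⟨(1 + |ι₁| + |ι₂|) * C, by positivity, fun η σ p => ?_⟩
  have hm := one_pos.trans_le (one_le_minJb η σ p)
  have hterm : ∀ ι y, minJb η σ p ≤ jb y →
      |ι * iteratedDeriv (a + b) jb y| ≤ |ι| * (C / minJb η σ p) := fun ι y hy => by
    rw [abs_mul, hk]
    exact mul_le_mul_of_nonneg_left ((hC y).trans (div_le_div_of_nonneg_left hC0 hm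
      (hy.trans (le_self_pow₀ (one_le_jb y) (by omega))))) (abs_nonneg ι)
  have hη : |if b = 0 then ι₁ * iteratedDeriv a jb η else 0| ≤ |ι₁| * (C / minJb η σ p) := by
    split_ifs with h
    · subst h; exact hterm ι₁ η ((minJb_le_min η σ p).trans (min_le_left _ _))
    · simp only [abs_zero]; positivity
  have hσ : |if a = 0 then ι₂ * iteratedDeriv b jb σ else 0| ≤ |ι₂| * (C / minJb η σ p) := by
    split_ifs with h
    · subst h; simpa using hterm ι₂ σ ((minJb_le_min η σ p).trans (min_le_right _ _))
    · simp only [abs_zero]; positivity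
  have hξ := hterm 1 _ (minJb_le_jb_add η σ p)
  rw [one_mul, abs_one, one_mul] at hξ
  simp only [phaseDeriv, and_true, add_zero]
  calc _ ≤ |iteratedDeriv (a + b) jb (p + η + σ)| + |if b = 0 then ι₁ * iteratedDeriv a jb η else 0|
        + |if a = 0 then ι₂ * iteratedDeriv b jb σ else 0| :=
        (abs_sub _ _).trans (add_le_add_left (abs_sub _ _) _)
    _ ≤ _ := by rw [mul_div_assoc]; linarith

lemma abs_le_of_abs_mul_min_jb_le {η σ p : ℝ} (hp : |p| * min (jb η) (jb σ) ≤ 1 / 8) :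
    |p| ≤ 1 / 8 := by
  nlinarith [abs_nonneg p, le_min (one_le_jb η) (one_le_jb σ)]

section PhaseBounds

variable {ι₁ ι₂ : ℝ}

lemma one_le_four_mul_min_mul_abs_Phi_add (h₁ : ι₁ = 1 ∨ ι₁ = -1) (h₂ : ι₂ = 1 ∨ ι₂ = -1)
    (η σ : ℝ) : 1 ≤ 4 * min (jb (η + σ)) (min (jb η) (jb σ)) * |Phi ι₁ ι₂ (η + σ) η σ| := by
  have hm1 : 1 ≤ min (jb (η + σ)) (min (jb η) (jb σ)) :=
    le_min (one_le_jb _) (le_min (one_le_jb _) (one_le_jb _))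
  have hm : 0 ≤ 4 * min (jb (η + σ)) (min (jb η) (jb σ)) := by linarith
  rw [Phi]
  rcases h₁ with rfl | rfl <;> rcases h₂ with rfl | rfl
  · exact (one_le_four_mul_min_mul_jb_add_jb_sub η σ).trans
      (mul_le_mul_of_nonneg_left (le_abs.2 (Or.inr (by linarith))) hm)
  · have := one_le_four_mul_min_mul_jb_add_jb_sub (η + σ) (-σ)
    rw [add_neg_cancel_right, jb_neg, min_left_comm] at this
    exact this.trans (mul_le_mul_of_nonneg_left (le_abs.2 (Or.inl (by linarith))) hm)
  · have := one_le_four_mul_min_mul_jb_add_jb_sub (η + σ) (-η)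
    rw [add_neg_cancel_comm, jb_neg, min_left_comm, min_comm (jb σ)] at this
    exact this.trans (mul_le_mul_of_nonneg_left (le_abs.2 (Or.inl (by linarith))) hm)
  · have := one_le_jb (η + σ); have := one_le_jb η; have := one_le_jb σ
    nlinarith [le_abs_self (jb (η + σ) - -1 * jb η - -1 * jb σ)]

lemma one_le_nine_mul_minJb_mul_abs_Phi (h₁ : ι₁ = 1 ∨ ι₁ = -1) (h₂ : ι₂ = 1 ∨ ι₂ = -1)
    {η σ p : ℝ} (hp : |p| * min (jb η) (jb σ) ≤ 1 / 8) :
    1 ≤ 9 * minJb η σ p * |Phi ι₁ ι₂ (p + η + σ) η σ| := by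
  set m₀ := min (jb (η + σ)) (min (jb η) (jb σ))
  have h₀ := one_le_four_mul_min_mul_abs_Phi_add h₁ h₂ η σ
  have hm₀ : m₀ ≤ min (jb η) (jb σ) := min_le_right _ _
  have hm₀1 : 1 ≤ m₀ := le_min (one_le_jb _) (le_min (one_le_jb _) (one_le_jb _))
  have hp8 := abs_le_of_abs_mul_min_jb_le hp
  have hξ : |jb (η + σ) - jb (p + η + σ)| ≤ |p| := by
    simpa [abs_sub_comm] using abs_jb_sub_jb_le (η + σ) (p + η + σ)
  have hpert : |Phi ι₁ ι₂ (η + σ) η σ| ≤ |Phi ι₁ ι₂ (p + η + σ) η σ| + |p| := by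
    have := abs_sub_abs_le_abs_sub (Phi ι₁ ι₂ (η + σ) η σ) (Phi ι₁ ι₂ (p + η + σ) η σ)
    unfold Phi at this ⊢
    rw [sub_sub_sub_cancel_right, sub_sub_sub_cancel_right] at this
    linarith
  have hm : m₀ ≤ 9 / 8 * minJb η σ p := by
    rw [minJb, mul_min_of_nonneg _ _ (by norm_num)]
    refine le_min ((min_le_left _ _).trans ?_) (hm₀.trans ?_)
    · linarith [one_le_jb (p + η + σ), (le_abs_self _).trans hξ]
    · linarith [le_min (one_le_jb η) (one_le_jb σ)]
  nlinarith [mul_le_mul_of_nonneg_left hpert (by linarith : (0 : ℝ) ≤ m₀),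
    mul_le_mul_of_nonneg_left hm₀ (abs_nonneg p),
    mul_le_mul_of_nonneg_right hm (abs_nonneg (Phi ι₁ ι₂ (p + η + σ) η σ))]

lemma Phi_ne_zero (h₁ : ι₁ = 1 ∨ ι₁ = -1) (h₂ : ι₂ = 1 ∨ ι₂ = -1) {η σ p : ℝ}
    (hp : |p| * min (jb η) (jb σ) ≤ 1 / 8) : Phi ι₁ ι₂ (p + η + σ) η σ ≠ 0 := fun h => by
  have := one_le_nine_mul_minJb_mul_abs_Phi h₁ h₂ hp
  rw [h, abs_zero, mul_zero] at this
  exact absurd this (by norm_num)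

lemma inv_minJb_le_nine_mul_abs_Phi (h₁ : ι₁ = 1 ∨ ι₁ = -1) (h₂ : ι₂ = 1 ∨ ι₂ = -1)
    {η σ p : ℝ} (hp : |p| * min (jb η) (jb σ) ≤ 1 / 8) :
    (minJb η σ p)⁻¹ ≤ 9 * |Phi ι₁ ι₂ (p + η + σ) η σ| := by
  rw [inv_le_iff_one_le_mul₀' (one_pos.trans_le (one_le_minJb η σ p))]
  linarith [one_le_nine_mul_minJb_mul_abs_Phi h₁ h₂ hp]

lemma seven_eighths_le_abs_Phi (h₁ : ι₁ = 1 ∨ ι₁ = -1) (h₂ : ι₂ = 1 ∨ ι₂ = -1) {η σ p : ℝ}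
    (hp : |p| ≤ 1 / 8) (hmis : ι₁ * ((p + η + σ) * η) < 0) :
    7 / 8 ≤ |Phi ι₁ ι₂ (p + η + σ) η σ| := by
  set ξ := p + η + σ
  have hσ := abs_jb_sub_jb_le σ (ξ - η)
  rw [show σ - (ξ - η) = -p by ring, abs_neg] at hσ
  have := abs_le.1 (hσ.trans hp)
  have := one_le_jb ξ; have := one_le_jb η; have := one_le_jb σ
  rw [Phi]
  rcases h₁ with rfl | rfl
  · -- `ξ` and `η` have opposite signs, so `⟨ξ - η⟩ ≥ max(⟨ξ⟩, ⟨η⟩)`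
    have hξ : jb ξ ≤ jb (ξ - η) := jb_le_jb_iff.2 (by nlinarith)
    have hη : jb η ≤ jb (ξ - η) := jb_le_jb_iff.2 (by nlinarith)
    rcases h₂ with rfl | rfl
    · exact le_abs.2 (Or.inr (by linarith))
    · exact le_abs.2 (Or.inl (by linarith))
  · -- `ξ` and `η` have the same sign, so `⟨ξ - η⟩ ≤ max(⟨ξ⟩, ⟨η⟩)`
    have hξη : jb (ξ - η) ≤ jb ξ ∨ jb (ξ - η) ≤ jb η := by
      rcases le_total (ξ ^ 2) (η ^ 2) with h | h
      · exact Or.inr (jb_le_jb_iff.2 (by nlinarith))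
      · exact Or.inl (jb_le_jb_iff.2 (by nlinarith))
    rcases h₂ with rfl | rfl
    · exact le_abs.2 (Or.inl (by rcases hξη with h | h <;> linarith))
    · exact le_abs.2 (Or.inl (by linarith))

lemma abs_phaseDeriv_eta_le_nine_mul (h₁ : ι₁ = 1 ∨ ι₁ = -1) (h₂ : ι₂ = 1 ∨ ι₂ = -1) {η σ p : ℝ}
    (hp : |p| * min (jb η) (jb σ) ≤ 1 / 8) :
    |phaseDeriv ι₁ ι₂ (1, 0, 0) η σ p| ≤ 9 * |phaseDeriv ι₁ ι₂ 0 η σ p| := by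
  set ξ := p + η + σ
  have hD : phaseDeriv ι₁ ι₂ (1, 0, 0) η σ p = ξ / jb ξ - ι₁ * (η / jb η) := by
    simp [phaseDeriv, iteratedDeriv_one_jb, ξ]
  rw [hD, phaseDeriv_zero]
  rcases le_or_gt 0 (ι₁ * (ξ * η)) with haligned | hmis
  · have hmin : minJb η σ p ≤ min (jb ξ) (jb η) :=
      le_min (minJb_le_jb_add η σ p) ((minJb_le_min η σ p).trans (min_le_left _ _))
    have hdiff : |ξ / jb ξ - ι₁ * (η / jb η)| ≤ (min (jb ξ) (jb η))⁻¹ := by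
      rcases h₁ with rfl | rfl
      · simpa using abs_div_jb_sub_div_jb_le (by linarith)
      · have := abs_div_jb_sub_div_jb_le (x := ξ) (y := -η) (by linarith)
        rwa [jb_neg, neg_div, ← neg_one_mul] at this
    exact hdiff.trans ((inv_anti₀ (one_pos.trans_le (one_le_minJb η σ p)) hmin).trans
      (inv_minJb_le_nine_mul_abs_Phi h₁ h₂ hp))
  · have hΦ := seven_eighths_le_abs_Phi h₁ h₂ (abs_le_of_abs_mul_min_jb_le hp) hmis
    have hι : |ι₁| = 1 := by rcases h₁ with rfl | rfl <;> simp
    have := abs_div_jb_le_one ξ; have := abs_div_jb_le_one η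
    calc |ξ / jb ξ - ι₁ * (η / jb η)| ≤ |ξ / jb ξ| + |ι₁| * |η / jb η| := by
          rw [← abs_mul]; exact abs_sub _ _
      _ ≤ 9 * |Phi ι₁ ι₂ (p + η + σ) η σ| := by rw [hι]; linarith

lemma exists_abs_phaseDeriv_le_mul_abs_phaseDeriv_zero (h₁ : ι₁ = 1 ∨ ι₁ = -1)
    (h₂ : ι₂ = 1 ∨ ι₂ = -1) (α : ℕ × ℕ × ℕ) : ∃ K, ∀ η σ p, |p| * min (jb η) (jb σ) ≤ 1 / 8 →
      |phaseDeriv ι₁ ι₂ α η σ p| ≤ K * minJb η σ p ^ α.2.2 * |phaseDeriv ι₁ ι₂ 0 η σ p| := by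
  obtain ⟨a, b, c⟩ := α
  rcases c with _ | c
  · rcases Nat.lt_or_ge (a + b) 2 with hab | hab
    · obtain ⟨rfl, rfl⟩ | ⟨rfl, rfl⟩ | ⟨rfl, rfl⟩ :
          (a = 0 ∧ b = 0) ∨ (a = 1 ∧ b = 0) ∨ (a = 0 ∧ b = 1) := by omega
      · exact ⟨1, fun η σ p _ => by rw [pow_zero, mul_one, one_mul]; rfl⟩
      · exact ⟨9, fun η σ p hp => by simpa using abs_phaseDeriv_eta_le_nine_mul h₁ h₂ hp⟩
      · refine ⟨9, fun η σ p hp => ?_⟩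
        show |phaseDeriv ι₁ ι₂ (0, 1, 0) η σ p| ≤ 9 * 1 * |phaseDeriv ι₁ ι₂ (0, 0, 0) η σ p|
        rw [phaseDeriv_swap, phaseDeriv_swap ι₁ ι₂ 0 0 0, mul_one]
        exact abs_phaseDeriv_eta_le_nine_mul h₂ h₁ (by rwa [min_comm])
    · obtain ⟨C, hC0, hC⟩ := exists_abs_phaseDeriv_le_div_minJb ι₁ ι₂ hab
      refine ⟨C * 9, fun η σ p hp => ?_⟩
      rw [phaseDeriv_zero, pow_zero, mul_one, mul_assoc]
      exact (hC η σ p).trans (div_eq_mul_inv C _ ▸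
        mul_le_mul_of_nonneg_left (inv_minJb_le_nine_mul_abs_Phi h₁ h₂ hp) hC0)
  · obtain ⟨C, hC0, hC⟩ := exists_abs_phaseDeriv_p_succ_le ι₁ ι₂ a b c
    refine ⟨9 * C, fun η σ p hp => ?_⟩
    have hΦ := one_le_nine_mul_minJb_mul_abs_Phi h₁ h₂ hp
    have hm := one_le_minJb η σ p
    have hpow : minJb η σ p ≤ minJb η σ p ^ (c + 1) := le_self_pow₀ hm (by omega)
    rw [phaseDeriv_zero]
    calc |phaseDeriv ι₁ ι₂ (a, b, c + 1) η σ p| ≤ C * 1 := by rw [mul_one]; exact hC η σ p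
      _ ≤ C * (9 * minJb η σ p * |Phi ι₁ ι₂ (p + η + σ) η σ|) := by gcongr
      _ ≤ C * (9 * minJb η σ p ^ (c + 1) * |Phi ι₁ ι₂ (p + η + σ) η σ|) := by gcongr
      _ = _ := by ring

/-- The region `|p| ≲ 1 / R(η, σ)`, through `min(⟨η⟩, ⟨σ⟩) ≤ 2 R(η, σ)`. -/
def nearRegion : Set (ℝ × ℝ × ℝ) := {x | |x.2.2| * min (jb x.1) (jb x.2.1) ≤ 1 / 8}

lemma isBigO_inv_phaseDeriv_zero (h₁ : ι₁ = 1 ∨ ι₁ = -1) (h₂ : ι₂ = 1 ∨ ι₂ = -1) :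
    (fun x : ℝ × ℝ × ℝ => (phaseDeriv ι₁ ι₂ 0 x.1 x.2.1 x.2.2)⁻¹) =O[𝓟 nearRegion]
      fun x => minJb x.1 x.2.1 x.2.2 := by
  refine isBigO_principal.2 ⟨9, fun x hx => ?_⟩
  have hΦ := one_le_nine_mul_minJb_mul_abs_Phi h₁ h₂ hx
  have hm := one_le_minJb x.1 x.2.1 x.2.2
  rw [Real.norm_eq_abs, Real.norm_eq_abs, abs_inv, phaseDeriv_zero,
    abs_of_pos (one_pos.trans_le hm), inv_le_iff_one_le_mul₀ (abs_pos.2 (Phi_ne_zero h₁ h₂ hx))]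
  linarith

lemma isBigO_phaseDeriv_div_phaseDeriv_zero (h₁ : ι₁ = 1 ∨ ι₁ = -1) (h₂ : ι₂ = 1 ∨ ι₂ = -1)
    (α : ℕ × ℕ × ℕ) :
    (fun x : ℝ × ℝ × ℝ => phaseDeriv ι₁ ι₂ α x.1 x.2.1 x.2.2 / phaseDeriv ι₁ ι₂ 0 x.1 x.2.1 x.2.2)
      =O[𝓟 nearRegion] fun x => minJb x.1 x.2.1 x.2.2 ^ α.2.2 := by
  obtain ⟨K, hK⟩ := exists_abs_phaseDeriv_le_mul_abs_phaseDeriv_zero h₁ h₂ α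
  refine isBigO_principal.2 ⟨K, fun x hx => ?_⟩
  have hm := one_le_minJb x.1 x.2.1 x.2.2
  have hΦ := Phi_ne_zero h₁ h₂ hx
  rw [← phaseDeriv_zero] at hΦ
  rw [Real.norm_eq_abs, Real.norm_eq_abs, abs_div, abs_of_pos (pow_pos (one_pos.trans_le hm) _),
    div_le_iff₀ (abs_pos.2 hΦ)]
  exact hK _ _ _ hx

end PhaseBounds

lemma abs_mul_min_jb_le_of_le_div_Rf {η σ p : ℝ} (hp : |p| ≤ 1 / 16 / Rf η σ) :
    |p| * min (jb η) (jb σ) ≤ 1 / 8 := by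
  have hη := jb_pos η; have hσ := jb_pos σ
  have hR : min (jb η) (jb σ) ≤ 2 * Rf η σ := by
    rw [Rf, mul_div_assoc', le_div_iff₀ (by positivity)]
    rcases min_cases (jb η) (jb σ) with ⟨h, _⟩ | ⟨h, _⟩ <;> rw [h] <;> nlinarith
  rw [le_div_iff₀ (by rw [Rf]; positivity)] at hp
  nlinarith [abs_nonneg p]

/-- Derivative bounds for the reciprocal of the Klein–Gordon phase near the set
`ξ = η + σ` (Lemma 6.2 (iii) in the paper):
`|∂_η^a ∂_σ^b ∂_p^c Φ_{ι₁ι₂}(p+η+σ,η,σ)⁻¹| ≲ min(⟨p+η+σ⟩,⟨η⟩,⟨σ⟩)^{1+c}`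
for `|p| ≤ κ/R(η,σ)`. -/
theorem derivative_bounds_reciprocal_phase (a b c : ℕ) (ι₁ ι₂ : ℝ)
    (h₁ : ι₁ = 1 ∨ ι₁ = -1) (h₂ : ι₂ = 1 ∨ ι₂ = -1) :
    ∃ κ C : ℝ, 0 < κ ∧ 0 < C ∧
      ∀ η σ p : ℝ, |p| ≤ κ / Rf η σ →
        |DrecPhi ι₁ ι₂ a b c η σ p| ≤
          C * (min (jb (p + η + σ)) (min (jb η) (jb σ))) ^ (1 + c) := by
  obtain ⟨f, hf, hDf⟩ := exists_isRecipExpansion_DrecPhi ι₁ ι₂ a b c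
  obtain ⟨C, hC⟩ := isBigO_principal.1 <|
    hf.isBigO ((AddMonoidHom.snd ℕ ℕ).comp (AddMonoidHom.snd ℕ (ℕ × ℕ)))
      (isBigO_inv_phaseDeriv_zero h₁ h₂) (isBigO_phaseDeriv_div_phaseDeriv_zero h₁ h₂)
  refine ⟨1 / 16, max C 1, by norm_num, by positivity, fun η σ p hp => ?_⟩
  have hp' := abs_mul_min_jb_le_of_le_div_Rf hp
  have hm := one_le_minJb η σ p
  rw [hDf η σ p (Phi_ne_zero h₁ h₂ hp')]
  calc |f (η, σ, p)| ≤ C * |minJb η σ p ^ (1 + c)| := hC (η, σ, p) hp'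
    _ ≤ max C 1 * minJb η σ p ^ (1 + c) := by
      rw [abs_of_pos (by positivity)]
      gcongr
      exact le_max_left _ _
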